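/- Fix an integer N ≥ 2 and let i denote the imaginary unit. Let R be an associative unital ℂ-algebra containing elements p_1,…,p_N and invertible elements a_1,…,a_N such that all p_m commute with each other, all a_m and a_m^{-1} commute with each other, [p_m, a_k] = −i·δ_{mk}·a_k for all m,k, and elements with distinct indices commute. For u ∈ ℂ let L_m(u) be the 2×2 matrix over R with rows (u·1 − p_m, −a_m) and (a_m^{-1}, 0), and write T_N(u) = L_N(u)⋯L_1(u) = [[A_N(u), B_N(u)],[C_N(u), D_N(u)]]. Then A_N(u) is a polynomial in u of degree N with coefficients in R: A_N(u) = u^N + X_1·u^{N−1} + X_2·u^{N−2} + (lower order), where X_1 = −(p_1 + p_2 + ⋯ + p_N) and X_2 = ∑_{1≤m<k≤N} p_m·p_k − ∑_{k=1}^{N−1} a_{k+1}·a_k^{−1}. -/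

import Mathlib

/-!
Left multiplication by `L_n(u)` gives `A_{n+1} = (u - p_n) A_n - a_n C_n` and `C_{n+1} = a_n⁻¹ A_n`,
so `A_n(u)` is the continuant of the three-term recurrence
`P_{n+2} = (X - p_{n+1}) P_{n+1} - a_{n+1} a_n⁻¹ P_n` in `R[X]`, evaluated at the central element
`u • 1`. The top three coefficients of `P_N` are read off the recurrence by induction on `N`.
-/

noncomputable section

open Matrix Finset

/-- The monodromy matrix `T_N(u) = L_N(u)·L_{N−1}(u)⋯L_1(u)` built from the local
Lax matrices. -/
def monodromy {R : Type*} [Ring R] {N : ℕ}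
    (L : Fin N → ℂ → Matrix (Fin 2) (Fin 2) R) (u : ℂ) : Matrix (Fin 2) (Fin 2) R :=
  ((List.ofFn fun m : Fin N => L m u).reverse).prod

open Polynomial

theorem Polynomial.eval_eq_sum_range_pow_sub_mul_coeff {R : Type*} [Semiring R] {x : R}
    (hx : ∀ r, Commute x r) {P : R[X]} {n : ℕ} (hP : P.natDegree ≤ n) :
    P.eval x = ∑ k ∈ range (n + 1), x ^ (n - k) * P.coeff (n - k) := by
  rw [eval_eq_sum_range' (Nat.lt_succ_of_le hP), ← sum_range_reflect]
  exact sum_congr rfl fun k _ => ((hx _).pow_left _).eq.symm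

theorem Fin.sum_filter_fst_lt_snd {M : Type*} [AddCommMonoid M] (N : ℕ) (f : ℕ → ℕ → M) :
    ∑ q ∈ univ.filter (fun q : Fin N × Fin N => q.1 < q.2), f q.1 q.2
      = ∑ k ∈ range N, ∑ m ∈ range k, f m k := by
  rw [sum_finset_product_right' _ univ (fun k => Iio k) (by simp)
    (f := fun (m k : Fin N) => f m k),
    ← Fin.sum_univ_eq_sum_range (fun k => ∑ m ∈ range k, f m k)]
  refine sum_congr rfl fun k _ => ?_
  rw [← Nat.Iio_eq_range, ← Fin.map_valEmbedding_Iio, sum_map]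
  rfl

section Lax

variable {R : Type*} [Ring R]

def todaLax (x p a b : R) : Matrix (Fin 2) (Fin 2) R := !![x - p, -a; b, 0]

theorem todaLax_mul_apply_zero_zero (x p a b : R) (M : Matrix (Fin 2) (Fin 2) R) :
    (todaLax x p a b * M) 0 0 = (x - p) * M 0 0 - a * M 1 0 := by
  simp [todaLax, Matrix.mul_apply, Fin.sum_univ_two, sub_eq_add_neg]

theorem todaLax_mul_apply_one_zero (x p a b : R) (M : Matrix (Fin 2) (Fin 2) R) :
    (todaLax x p a b * M) 1 0 = b * M 0 0 := by
  simp [todaLax, Matrix.mul_apply, Fin.sum_univ_two]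

theorem monodromy_succ {n : ℕ} (L : Fin (n + 1) → ℂ → Matrix (Fin 2) (Fin 2) R) (u : ℂ) :
    monodromy L u = L (Fin.last n) u * monodromy (fun m => L m.castSucc) u := by
  rw [monodromy, List.ofFn_succ', List.concat_eq_append, List.reverse_append]
  simp only [List.reverse_singleton, List.singleton_append, List.prod_cons]
  rfl

end Lax

section TodaPoly

variable {R : Type*} [Ring R] (p a b : ℕ → R)

def todaPoly : ℕ → R[X]
  | 0 => 1
  | 1 => X - C (p 0)
  | n + 2 => (X - C (p (n + 1))) * todaPoly (n + 1) - C (a (n + 1) * b n) * todaPoly n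

theorem natDegree_todaPoly_le : ∀ n, (todaPoly p a b n).natDegree ≤ n
  | 0 => by simp [todaPoly]
  | 1 => natDegree_X_sub_C_le _
  | n + 2 => by
    rw [todaPoly]
    refine (natDegree_sub_le_of_le
      (natDegree_mul_le_of_le (natDegree_X_sub_C_le _) (natDegree_todaPoly_le (n + 1)))
      ((natDegree_C_mul_le _ _).trans (natDegree_todaPoly_le n))).trans ?_
    omega

theorem coeff_todaPoly_add_two_succ (n j : ℕ) :
    (todaPoly p a b (n + 2)).coeff (j + 1) = (todaPoly p a b (n + 1)).coeff j
      - p (n + 1) * (todaPoly p a b (n + 1)).coeff (j + 1)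
      - a (n + 1) * b n * (todaPoly p a b n).coeff (j + 1) := by
  rw [todaPoly, sub_mul, coeff_sub, coeff_sub, coeff_X_mul, coeff_C_mul, coeff_C_mul]

theorem coeff_todaPoly_self : ∀ n, (todaPoly p a b n).coeff n = 1
  | 0 => by simp [todaPoly]
  | 1 => by simp [todaPoly]
  | n + 2 => by
    rw [coeff_todaPoly_add_two_succ, coeff_todaPoly_self (n + 1),
      coeff_eq_zero_of_natDegree_lt ((natDegree_todaPoly_le p a b (n + 1)).trans_lt (by omega)),
      coeff_eq_zero_of_natDegree_lt ((natDegree_todaPoly_le p a b n).trans_lt (by omega))]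
    simp

theorem coeff_todaPoly_succ_self : ∀ n,
    (todaPoly p a b (n + 1)).coeff n = -∑ m ∈ range (n + 1), p m
  | 0 => by simp [todaPoly]
  | n + 1 => by
    rw [coeff_todaPoly_add_two_succ, coeff_todaPoly_succ_self n, coeff_todaPoly_self,
      coeff_eq_zero_of_natDegree_lt ((natDegree_todaPoly_le p a b n).trans_lt (by omega)),
      sum_range_succ _ (n + 1)]
    simp only [mul_one, mul_zero, sub_zero, neg_add]
    abel

theorem coeff_todaPoly_add_two_self : ∀ n,
    (todaPoly p a b (n + 2)).coeff n = ∑ k ∈ range (n + 2), ∑ m ∈ range k, p k * p m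
      - ∑ j ∈ range (n + 1), a (j + 1) * b j
  | 0 => by simp [todaPoly, mul_coeff_zero, sum_range_succ]
  | n + 1 => by
    rw [coeff_todaPoly_add_two_succ, coeff_todaPoly_add_two_self n, coeff_todaPoly_succ_self,
      coeff_todaPoly_self, sum_range_succ (fun k => ∑ m ∈ range k, p k * p m) (n + 2),
      sum_range_succ (fun j => a (j + 1) * b j) (n + 1)]
    simp only [mul_neg, mul_one, sub_neg_eq_add, mul_sum, show n + 1 + 1 = n + 2 from rfl]
    abel

variable {p a b}

theorem eval_todaPoly_add_two {x : R} (hx : ∀ r, Commute x r) (n : ℕ) :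
    (todaPoly p a b (n + 2)).eval x = (x - p (n + 1)) * (todaPoly p a b (n + 1)).eval x
      - a (n + 1) * b n * (todaPoly p a b n).eval x := by
  rw [todaPoly, sub_mul, eval_sub, eval_sub, eval_C_mul, eval_C_mul, X_mul, eval_mul_X,
    ← (hx _).eq, sub_mul]

theorem monodromy_apply_zero_zero_eq_eval_todaPoly {x : R} (hx : ∀ r, Commute x r) (u : ℂ) :
    ∀ {n : ℕ} (L : Fin n → ℂ → Matrix (Fin 2) (Fin 2) R),
      (∀ m : Fin n, L m u = todaLax x (p m) (a m) (b m)) →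
      monodromy L u 0 0 = (todaPoly p a b n).eval x
  | 0, L, _ => by simp [monodromy, todaPoly]
  | 1, L, hL => by
    rw [monodromy_succ, hL, todaLax_mul_apply_zero_zero]
    simp [monodromy, todaPoly]
  | n + 2, L, hL => by
    have h10 : monodromy (fun m => L m.castSucc) u 1 0
        = b n * monodromy (fun m => L m.castSucc.castSucc) u 0 0 := by
      rw [monodromy_succ, hL, todaLax_mul_apply_one_zero]
      rfl
    rw [monodromy_succ, hL, todaLax_mul_apply_zero_zero, h10,
      monodromy_apply_zero_zero_eq_eval_todaPoly hx u _ fun m => hL m.castSucc,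
      monodromy_apply_zero_zero_eq_eval_todaPoly hx u _ fun m => hL m.castSucc.castSucc,
      eval_todaPoly_add_two hx, mul_assoc]
    rfl

end TodaPoly

theorem toda_A_entry_polynomial
    (N : ℕ) (hN : 2 ≤ N)
    (R : Type*) [Ring R] [Algebra ℂ R] (p : Fin N → R) (a : Fin N → Rˣ)
    (hpp : ∀ m k, p m * p k = p k * p m)
    (L : Fin N → ℂ → Matrix (Fin 2) (Fin 2) R)
    (hL : ∀ m (u : ℂ),
      L m u = !![algebraMap ℂ R u - p m, -(a m : R); (((a m)⁻¹ : Rˣ) : R), 0]) :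
    ∃ X : ℕ → R,
      X 0 = 1 ∧
      X 1 = -(∑ m : Fin N, p m) ∧
      X 2 = (∑ q ∈ Finset.univ.filter (fun q : Fin N × Fin N => q.1 < q.2), p q.1 * p q.2)
          - ∑ k : Fin (N - 1),
              ((a (Fin.cast (by omega) k.succ) : R) *
                (((a (Fin.castLE (by omega) k.castSucc))⁻¹ : Rˣ) : R)) ∧
      ∀ u : ℂ, monodromy L u 0 0
          = ∑ k ∈ Finset.range (N + 1), algebraMap ℂ R (u ^ (N - k)) * X k := by
  obtain ⟨n, rfl⟩ : ∃ n, N = n + 2 := ⟨N - 2, by omega⟩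
  set pN : ℕ → R := Function.extend Fin.val p 0
  set aN : ℕ → R := Function.extend Fin.val (fun m => (a m : R)) 0
  set bN : ℕ → R := Function.extend Fin.val (fun m => (((a m)⁻¹ : Rˣ) : R)) 0
  have hpN (m : Fin (n + 2)) : pN m = p m := Fin.val_injective.extend_apply _ _ m
  have haN (m : Fin (n + 2)) : aN m = a m := Fin.val_injective.extend_apply _ _ m
  have hbN (m : Fin (n + 2)) : bN m = (((a m)⁻¹ : Rˣ) : R) := Fin.val_injective.extend_apply _ _ m
  set P := todaPoly pN aN bN (n + 2)
  refine ⟨fun k => P.coeff (n + 2 - k), coeff_todaPoly_self _ _ _ _, ?_, ?_, fun u => ?_⟩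
  · show P.coeff (n + 1) = _
    rw [coeff_todaPoly_succ_self, ← Fin.sum_univ_eq_sum_range pN]
    simp only [hpN]
  · show P.coeff n = _
    rw [coeff_todaPoly_add_two_self,
      ← Fin.sum_filter_fst_lt_snd (n + 2) (fun m k => pN k * pN m),
      ← Fin.sum_univ_eq_sum_range (fun j => aN (j + 1) * bN j)]
    congr 1
    · exact sum_congr rfl fun q _ => by rw [hpN, hpN, hpp]
    · exact sum_congr rfl fun k _ => by rw [← haN, ← hbN]; rfl
  · have hx : ∀ r, Commute (algebraMap ℂ R u) r := Algebra.commute_algebraMap_left u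
    have hLax (m : Fin (n + 2)) : L m u = todaLax (algebraMap ℂ R u) (pN m) (aN m) (bN m) := by
      rw [hL, todaLax, hpN, haN, hbN]
    rw [monodromy_apply_zero_zero_eq_eval_todaPoly hx u L hLax,
      eval_eq_sum_range_pow_sub_mul_coeff hx (natDegree_todaPoly_le _ _ _ _)]
    simp only [map_pow]
    rfl
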